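/- For all ρ ∈ [0,1] with ρ ≠ 1, the limit as n → ∞ of (ρ^(2n+2) + ρ)/(ρ + 1) equals ρ/(1+ρ); for ρ = 1 the expression equals 1 for all n. Hence the asymptotic density of Rule 138 is ρ/(1+ρ) for ρ < 1 and 1 for ρ = 1, so the limit function is discontinuous at ρ = 1. -/

import Mathlib

/-- The set of lattice positions of a triangular block of size `r`:
pairs `(i,j)` with `i,j ≥ 1` and `i + j ≤ r + 1`. -/
def Tri (r : ℕ) : Finset (ℕ × ℕ) :=
  (Finset.range (r + 2) ×ˢ Finset.range (r + 2)).filter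
    (fun p => 1 ≤ p.1 ∧ 1 ≤ p.2 ∧ p.1 + p.2 ≤ r + 1)

/-- A triangular block of size `r`: an assignment of values in `{0,1}` to the
positions of `Tri r`. -/
def TriBlock (r : ℕ) := {p // p ∈ Tri r} → Fin 2

instance (r : ℕ) : Fintype (TriBlock r) := by unfold TriBlock; infer_instance
instance (r : ℕ) : DecidableEq (TriBlock r) := by unfold TriBlock; infer_instance

/-- Extend a triangular block to a total function on `ℕ × ℕ` (zero outside). -/
def ext {r : ℕ} (b : TriBlock r) : ℕ → ℕ → Fin 2 :=
  fun i j => if h : (i, j) ∈ Tri r then b ⟨(i, j), h⟩ else 0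

/-- The value of block `b` at position `(i,j)` (zero outside the block). -/
def cell {r : ℕ} (b : TriBlock r) (i j : ℕ) : Fin 2 := ext b i j

/-- One application of the local rule `g` (arguments: top, center, right)
at every site: `c(i,j) = g(b(i,j+1), b(i,j), b(i+1,j))`. -/
def step (g : Fin 2 → Fin 2 → Fin 2 → Fin 2) (s : ℕ → ℕ → Fin 2) : ℕ → ℕ → Fin 2 :=
  fun i j => g (s i (j + 1)) (s i j) (s (i + 1) j)

/-- Restrict a total function to a triangular block of size `r`. -/
def contract (r : ℕ) (s : ℕ → ℕ → Fin 2) : TriBlock r := fun q => s q.1.1 q.1.2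

/-- The block evolution operator: maps a block of size `m` (intended `m = r+1`)
to a block of size `r` via `c(i,j) = g(b(i,j+1), b(i,j), b(i+1,j))`. -/
def evolve (g : Fin 2 → Fin 2 → Fin 2 → Fin 2) {m : ℕ} (r : ℕ) (b : TriBlock m) :
    TriBlock r := contract r (step g (ext b))

/-- The `n`-fold iterate of the block evolution operator, from blocks of size `m`
(intended `m = r + n`) to blocks of size `r`. -/
def evolveN (g : Fin 2 → Fin 2 → Fin 2 → Fin 2) (n : ℕ) {m : ℕ} (r : ℕ)
    (b : TriBlock m) : TriBlock r := contract r ((step g)^[n] (ext b))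

/-- The single-cell block consisting of a `1`. -/
def oneBlock : TriBlock 1 := fun _ => 1

/-- Number of cells in state 1 in a block. -/
def numOnes {r : ℕ} (b : TriBlock r) : ℕ :=
  (@Finset.filter _ (fun x => b x = 1) (fun _ => instDecidableEqFin 2 _ _) Finset.univ).card

/-- Number of cells in state 0 in a block. -/
def numZeros {r : ℕ} (b : TriBlock r) : ℕ :=
  (@Finset.filter _ (fun x => b x = 0) (fun _ => instDecidableEqFin 2 _ _) Finset.univ).card

/-- The set of `n`-step preimages of the single-cell block `1`:
blocks of size `n + 1` mapped by `n` iterations of the block evolution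
operator of `g` to the single cell `1`. -/
def preimages (g : Fin 2 → Fin 2 → Fin 2 → Fin 2) (n : ℕ) :
    Finset (TriBlock (n + 1)) :=
  Finset.univ.filter (fun b => evolveN g n 1 b = oneBlock)

/-- `Pₙ(1)`: the density of ones after `n` iterations, starting from a
Bernoulli-`ρ` initial measure, computed by summing the probabilities of all
`n`-step preimages of the single cell `1`. -/
noncomputable def Pn (g : Fin 2 → Fin 2 → Fin 2 → Fin 2) (n : ℕ) (ρ : ℝ) : ℝ :=
  ∑ a ∈ preimages g n, ρ ^ numOnes a * (1 - ρ) ^ numZeros a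


open Filter Topology Set

noncomputable def rule138Density (ρ : ℝ) : ℝ := if ρ = 1 then 1 else ρ / (1 + ρ)

theorem tendsto_rule138_density_of_abs_lt_one {ρ : ℝ} (hρ : |ρ| < 1) :
    Tendsto (fun n : ℕ => (ρ ^ (2 * n + 2) + ρ) / (ρ + 1)) atTop (𝓝 (ρ / (1 + ρ))) := by
  have hpow : Tendsto (fun n : ℕ => ρ ^ (2 * n + 2)) atTop (𝓝 0) :=
    (tendsto_pow_atTop_nhds_zero_of_abs_lt_one hρ).comp
      (tendsto_atTop_mono (fun n => by dsimp; omega) tendsto_id)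
  simpa [add_comm] using (hpow.add_const ρ).div_const (ρ + 1)

theorem not_continuousWithinAt_of_tendsto {X Y : Type*} [TopologicalSpace X]
    [TopologicalSpace Y] [T2Space Y] {f : X → Y} {s t : Set X} {x : X} {y : Y}
    [(𝓝[t] x).NeBot] (hts : t ⊆ s) (hf : Tendsto f (𝓝[t] x) (𝓝 y)) (hy : y ≠ f x) :
    ¬ ContinuousWithinAt f s x :=
  fun h => hy (tendsto_nhds_unique hf (h.mono hts).tendsto)

theorem tendsto_rule138Density_left :
    Tendsto rule138Density (𝓝[Ico 0 1] 1) (𝓝 (1 / 2)) := by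
  have hcont : Tendsto (fun ρ : ℝ => ρ / (1 + ρ)) (𝓝[Ico 0 1] 1) (𝓝 (1 / (1 + 1))) :=
    (tendsto_id.div (tendsto_const_nhds.add tendsto_id) (by norm_num)).mono_left
      nhdsWithin_le_nhds
  have heq : (fun ρ : ℝ => ρ / (1 + ρ)) =ᶠ[𝓝[Ico 0 1] 1] rule138Density :=
    eventually_nhdsWithin_of_forall fun ρ hρ => (if_neg hρ.2.ne).symm
  rw [one_add_one_eq_two] at hcont
  exact hcont.congr' heq

theorem not_continuousWithinAt_rule138Density :
    ¬ ContinuousWithinAt rule138Density (Icc 0 1) 1 := by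
  have := right_nhdsWithin_Ico_neBot (zero_lt_one' ℝ)
  refine not_continuousWithinAt_of_tendsto Ico_subset_Icc_self tendsto_rule138Density_left ?_
  norm_num [rule138Density]

/-- for `ρ ∈ [0,1]`, `ρ ≠ 1`, the sequence
`(ρ^(2n+2)+ρ)/(ρ+1)` tends to `ρ/(1+ρ)`; for `ρ = 1` it is identically `1`;
and the resulting limit function is discontinuous at `ρ = 1` (within `[0,1]`). -/
theorem stmt12 :
    (∀ ρ : ℝ, ρ ∈ Set.Icc (0 : ℝ) 1 → ρ ≠ 1 →
        Filter.Tendsto (fun n : ℕ => (ρ ^ (2 * n + 2) + ρ) / (ρ + 1))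
          Filter.atTop (nhds (ρ / (1 + ρ)))) ∧
    (∀ n : ℕ, (((1 : ℝ) ^ (2 * n + 2) + 1) / (1 + 1)) = 1) ∧
    ¬ ContinuousWithinAt (fun ρ : ℝ => if ρ = 1 then (1 : ℝ) else ρ / (1 + ρ))
        (Set.Icc (0 : ℝ) 1) 1 := by
  refine ⟨fun ρ hρ hρ1 => tendsto_rule138_density_of_abs_lt_one ?_, fun n => by norm_num,
    not_continuousWithinAt_rule138Density⟩
  exact abs_lt.2 ⟨by linarith [hρ.1], lt_of_le_of_ne hρ.2 hρ1⟩
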